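/- arXiv:2208.01778 — 2 statements merged into one kernel-verified Lean document; each statement's English description precedes it below -/
import Mathlib

section
/- Let X be a pure d-dimensional finite simplicial complex, let z be an i-face, and let X_z = {x − z : z ⊆ x ∈ X} be the link of X at z, which is pure of dimension d−1−i. Then for every k ≥ i and every k-face x of X containing z, the canonical weights satisfy w_X(x) = C(k+1, i+1) · w_X(z) · w_{X_z}(x − z). -/
open Finset

variable {V : Type} [DecidableEq V]

/-- A (finite) simplicial complex: a nonempty collection of finite subsets of the vertex
type `V`, closed under taking subsets.  The empty face belongs to every complex. -/
def IsComplex (X : Finset (Finset V)) : Prop :=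
  X.Nonempty ∧ ∀ s ∈ X, ∀ t ⊆ s, t ∈ X

/-- The faces of `X` having exactly `j` vertices, i.e. of dimension `j - 1`. -/
def faceSet (X : Finset (Finset V)) (j : ℕ) : Finset (Finset V) :=
  X.filter fun s => s.card = j

/-- `X` is pure of dimension `d`: every face is contained in a face with `d + 1` vertices. -/
def IsPure (X : Finset (Finset V)) (d : ℕ) : Prop :=
  ∀ s ∈ X, ∃ t ∈ X, s ⊆ t ∧ t.card = d + 1

/-- The canonical weight of a face `x` of a pure `d`-dimensional complex `X`:
`w(x) = C(d+1, |x|)⁻¹ ⬝ |X(d)|⁻¹ ⬝ #{y ∈ X(d) : x ⊆ y}`. -/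
noncomputable def wt (X : Finset (Finset V)) (d : ℕ) (x : Finset V) : ℝ :=
  ((d + 1).choose x.card : ℝ)⁻¹ * ((faceSet X (d + 1)).card : ℝ)⁻¹ *
    (((faceSet X (d + 1)).filter fun y => x ⊆ y).card : ℝ)


/-- The link of `X` at a face `z`: `X_z = { x \ z : z ⊆ x ∈ X }`. -/
def link (X : Finset (Finset V)) (z : Finset V) : Finset (Finset V) :=
  (X.filter fun s => z ⊆ s).image fun s => s \ z

/-!
Deleting `z` is a bijection from the top faces of `X` containing `z` onto the top faces of the
link `X_z`, and it carries those containing `x` onto those containing `x \ z`. Hence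
`w_{X_z}(x \ z)` is, up to its binomial normalisation, the fraction of top faces through `z`
that also pass through `x`, and the identity reduces to
`C(d+1, |x|) ⬝ C(|x|, |z|) = C(d+1, |z|) ⬝ C(d+1-|z|, |x|-|z|)`.
If no top face contains `x`, both sides vanish.
-/

lemma sdiff_subset_sdiff_iff_of_subset {z x s : Finset V} (hzx : z ⊆ x) (hzs : z ⊆ s) :
    x \ z ⊆ s \ z ↔ x ⊆ s := by
  refine ⟨fun h => ?_, fun h => sdiff_subset_sdiff h subset_rfl⟩
  rw [← sdiff_union_of_subset hzx, ← sdiff_union_of_subset hzs]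
  exact union_subset_union h subset_rfl

lemma faceSet_link (X : Finset (Finset V)) (z : Finset V) (j : ℕ) :
    faceSet (link X z) j = ((faceSet X (j + z.card)).filter (z ⊆ ·)).image (· \ z) := by
  ext t
  simp only [faceSet, link, mem_image, mem_filter]
  constructor
  · rintro ⟨⟨s, ⟨hs, hzs⟩, rfl⟩, hcard⟩
    refine ⟨s, ⟨⟨hs, ?_⟩, hzs⟩, rfl⟩
    have := card_le_card hzs
    rw [← hcard, card_sdiff_of_subset hzs]
    omega
  · rintro ⟨s, ⟨⟨hs, hcard⟩, hzs⟩, rfl⟩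
    have := card_le_card hzs
    exact ⟨⟨s, ⟨hs, hzs⟩, rfl⟩, by rw [card_sdiff_of_subset hzs]; omega⟩

lemma card_filter_faceSet_link (X : Finset (Finset V)) (z : Finset V) (j : ℕ)
    (p : Finset V → Prop) [DecidablePred p] :
    #((faceSet (link X z) j).filter p) =
      #((faceSet X (j + z.card)).filter fun s => z ⊆ s ∧ p (s \ z)) := by
  rw [faceSet_link, filter_image, filter_filter, card_image_of_injOn]
  intro a ha b hb hab
  exact (sdiff_left_inj (mem_filter.mp ha).2.1 (mem_filter.mp hb).2.1).mp hab

lemma card_faceSet_link (X : Finset (Finset V)) (z : Finset V) (j : ℕ) :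
    #(faceSet (link X z) j) = #((faceSet X (j + z.card)).filter (z ⊆ ·)) := by
  simpa using card_filter_faceSet_link X z j (fun _ => True)

lemma card_filter_superset_faceSet_link (X : Finset (Finset V)) {z x : Finset V} (hzx : z ⊆ x)
    (j : ℕ) :
    #((faceSet (link X z) j).filter (x \ z ⊆ ·)) =
      #((faceSet X (j + z.card)).filter (x ⊆ ·)) := by
  rw [card_filter_faceSet_link]
  congr 1
  refine filter_congr fun s _ => ?_
  exact ⟨fun ⟨hzs, h⟩ => (sdiff_subset_sdiff_iff_of_subset hzx hzs).mp h,
    fun h => ⟨hzx.trans h, sdiff_subset_sdiff h subset_rfl⟩⟩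

lemma wt_link (X : Finset (Finset V)) {d : ℕ} {z x : Finset V} (hzd : z.card ≤ d)
    (hzx : z ⊆ x) :
    wt (link X z) (d - z.card) (x \ z) =
      ((d + 1 - z.card).choose (x.card - z.card) : ℝ)⁻¹ *
        (#((faceSet X (d + 1)).filter (z ⊆ ·)) : ℝ)⁻¹ *
          #((faceSet X (d + 1)).filter (x ⊆ ·)) := by
  have hdim : d - z.card + 1 + z.card = d + 1 := by omega
  rw [wt, card_faceSet_link, card_filter_superset_faceSet_link X hzx, hdim,
    card_sdiff_of_subset hzx, show d - z.card + 1 = d + 1 - z.card by omega]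

theorem weight_in_link_general (X : Finset (Finset V)) (d : ℕ)
    (z : Finset V) (hzd : z.card ≤ d)
    (x : Finset V) (hzx : z ⊆ x) :
    wt X d x = (x.card.choose z.card : ℝ) * wt X d z *
      wt (link X z) (d - z.card) (x \ z) := by
  rw [wt_link X hzd hzx, wt, wt]
  set top := faceSet X (d + 1)
  rcases eq_or_ne #(top.filter (x ⊆ ·)) 0 with hx | hx
  · simp [hx]
  obtain ⟨t, ht⟩ := card_ne_zero.mp hx
  obtain ⟨htop, hxt⟩ := mem_filter.mp ht
  have hxd : x.card ≤ d + 1 := (mem_filter.mp htop).2 ▸ card_le_card hxt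
  have hzx_card : z.card ≤ x.card := card_le_card hzx
  have hz_ne : #(top.filter (z ⊆ ·)) ≠ 0 :=
    card_ne_zero_of_mem (mem_filter.mpr ⟨htop, hzx.trans hxt⟩)
  have htop_ne : #top ≠ 0 := card_ne_zero_of_mem htop
  have hx_choose := (Nat.choose_pos hxd).ne'
  have hz_choose := (Nat.choose_pos (hzx_card.trans hxd)).ne'
  have hlink_choose := (Nat.choose_pos (Nat.sub_le_sub_right hxd z.card)).ne'
  field_simp
  exact_mod_cast (Nat.choose_mul hzx_card).symm

/-- For a pure `d`-dimensional complex `X`, a face `z` (of dimension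
`z.card - 1 ≤ d - 1`) and a face `x ⊇ z`, the canonical weights of `X` and of the link
`X_z` (which is pure of dimension `d - z.card`, i.e. `d - 1 - dim z`) satisfy
`w_X(x) = C(|x|, |z|) ⬝ w_X(z) ⬝ w_{X_z}(x \ z)`. -/
theorem weight_in_link (X : Finset (Finset V)) (d : ℕ)
    (hX : IsComplex X) (hpure : IsPure X d)
    (z : Finset V) (hz : z ∈ X) (hzd : z.card ≤ d)
    (x : Finset V) (hx : x ∈ X) (hzx : z ⊆ x) :
    wt X d x = (x.card.choose z.card : ℝ) * wt X d z *
      wt (link X z) (d - z.card) (x \ z) :=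
  weight_in_link_general X d z hzd x hzx
end

section
/- Let X be a k-regular finite graph which is an α-skeleton expander, let F be a finite field, m ≤ k, and for each vertex v let T_v: F^m → F^{E(v)} ≅ F^k be an injective linear map with image a code C_v of relative distance ≥ ε, where ε > α. Define the sheaf F on X by F(v) = F^m, F(e) = F for edges e, and res_{e←v} = (projection to coordinate e) ∘ T_v. Then every nonzero global section f ∈ Z⁰(X,F) satisfies ‖f‖_Ham ≥ ε − α; i.e., the 0-cocycle code Z⁰(X,F) ⊆ (F^m)^{X(0)} has relative distance at least ε − α. -/
/-! At a vertex `v` of the support `S` of a nonzero global section `f`, the local codeword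
`T v (f v)` is nonzero, hence nonzero on at least `ε k` edges at `v`. Compatibility on an edge
forces the codeword at the other endpoint to be nonzero too, so all these edges lie in `E(S)`.
Summing over `S` gives `ε k |S| ≤ 2 |E(S)|`, i.e. `ε w(S) ≤ w(E(S))`, and the expansion bound
`w(E(S)) ≤ w(S)² + α w(S)` yields `ε - α ≤ w(S) = ‖f‖_Ham`. -/

open Finset

variable {V : Type} [DecidableEq V]

open scoped Classical

theorem Finset.sum_card_filter_mem_le_mul_card {α : Type*} [DecidableEq α] (S : Finset α)
    {B : Finset (Finset α)} {r : ℕ} (hB : ∀ e ∈ B, #e ≤ r) :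
    ∑ v ∈ S, #{e ∈ B | v ∈ e} ≤ r * #B :=
  calc ∑ v ∈ S, #{e ∈ B | v ∈ e} = ∑ e ∈ B, #{v ∈ S | v ∈ e} :=
        sum_card_bipartiteAbove_eq_sum_card_bipartiteBelow (r := (· ∈ ·))
    _ ≤ ∑ _e ∈ B, r :=
        sum_le_sum fun e he => (card_le_card fun _ hx => (mem_filter.1 hx).2).trans (hB e he)
    _ = r * #B := by rw [sum_const, smul_eq_mul, mul_comm]

theorem Finset.exists_eq_pair_of_card_eq_two {α : Type*} [DecidableEq α] {e : Finset α} {v : α}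
    (he : #e = 2) (hv : v ∈ e) : ∃ u, v ≠ u ∧ e = {v, u} := by
  obtain ⟨u, hu⟩ := card_eq_one.1 (show #(e.erase v) = 1 by rw [card_erase_of_mem hv, he])
  refine ⟨u, fun h => ?_, ?_⟩
  · simpa [h] using hu.ge (mem_singleton_self u)
  · rw [← insert_erase hv, hu]

section ZeroCocycle

variable {X : Finset (Finset V)} {F M : Type*} [Semiring F] [AddCommMonoid M] [Module F M]
  {T : ∀ v : V, ({v} : Finset V) ∈ X →
    (M →ₗ[F] ({e : Finset V // e ∈ X ∧ e.card = 2 ∧ v ∈ e} → F))}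

noncomputable def vertexSupport [Fintype V]
    (f : {v : V // ({v} : Finset V) ∈ X} → M) : Finset V :=
  (univ.filter fun v => f v ≠ 0).map (Function.Embedding.subtype _)

variable [Fintype V] {f : {v : V // ({v} : Finset V) ∈ X} → M}

theorem card_vertexSupport [DecidablePred fun v => f v ≠ 0] :
    #(vertexSupport f) = #{v | f v ≠ 0} := by
  rw [vertexSupport, card_map]
  congr

theorem mem_vertexSupport {v : V} (hv : ({v} : Finset V) ∈ X) (hfv : f ⟨v, hv⟩ ≠ 0) :
    v ∈ vertexSupport f :=
  mem_map.2 ⟨⟨v, hv⟩, mem_filter.2 ⟨mem_univ _, hfv⟩, rfl⟩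

theorem singleton_mem_of_mem_vertexSupport {v : V} (hv : v ∈ vertexSupport f) :
    ({v} : Finset V) ∈ X := by
  obtain ⟨w, -, rfl⟩ := mem_map.1 hv
  exact w.2

theorem ne_zero_of_mem_vertexSupport {v : V} (hvS : v ∈ vertexSupport f)
    (hv : ({v} : Finset V) ∈ X) : f ⟨v, hv⟩ ≠ 0 := by
  obtain ⟨w, hw, rfl⟩ := mem_map.1 hvS
  exact (mem_filter.1 hw).2

variable (T f) in
def IsGlobalSection : Prop :=
  ∀ (u v : V) (hu : ({u} : Finset V) ∈ X) (hv : ({v} : Finset V) ∈ X)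
    (hne : u ≠ v) (he : ({u, v} : Finset V) ∈ X),
    T u hu (f ⟨u, hu⟩) ⟨{u, v}, he, Finset.card_pair hne, Finset.mem_insert_self u {v}⟩
      = T v hv (f ⟨v, hv⟩) ⟨{u, v}, he, Finset.card_pair hne, by simp⟩

theorem IsGlobalSection.subset_vertexSupport_of_apply_ne_zero (hf : IsGlobalSection T f)
    (hX : IsComplex X) {v : V} (hv : ({v} : Finset V) ∈ X)
    {e : {e : Finset V // e ∈ X ∧ e.card = 2 ∧ v ∈ e}}
    (hne : T v hv (f ⟨v, hv⟩) e ≠ 0) : e.1 ⊆ vertexSupport f := by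
  obtain ⟨e, heX, he2, hve⟩ := e
  obtain ⟨u, hvu, rfl⟩ := exists_eq_pair_of_card_eq_two he2 hve
  have huX : ({u} : Finset V) ∈ X := hX.2 _ heX _ (by simp)
  have hfv : f ⟨v, hv⟩ ≠ 0 := fun h => hne (by rw [h, map_zero]; rfl)
  have hfu : f ⟨u, huX⟩ ≠ 0 := fun h => hne (by rw [hf v u hv huX hvu heX, h, map_zero]; rfl)
  exact insert_subset (mem_vertexSupport hv hfv)
    (singleton_subset_iff.2 (mem_vertexSupport huX hfu))

theorem IsGlobalSection.card_apply_ne_zero_le (hf : IsGlobalSection T f) (hX : IsComplex X)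
    {v : V} (hv : ({v} : Finset V) ∈ X) :
    #{e | T v hv (f ⟨v, hv⟩) e ≠ 0} ≤
      #{e ∈ {e ∈ faceSet X 2 | e ⊆ vertexSupport f} | v ∈ e} :=
  card_le_card_of_injOn Subtype.val
    (fun e he => by
      simpa [faceSet, e.2.1, e.2.2.1, e.2.2.2] using
        hf.subset_vertexSupport_of_apply_ne_zero hX hv (mem_filter.1 he).2)
    Subtype.val_injective.injOn

theorem IsGlobalSection.mul_card_vertexSupport_le (hf : IsGlobalSection T f) (hX : IsComplex X)
    {k : ℕ} {ε : ℝ}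
    (hdist : ∀ (v : V) (hv : ({v} : Finset V) ∈ X) (c : M), c ≠ 0 →
      ε ≤ (#{e | T v hv c e ≠ 0} : ℝ) / k) :
    ε * #(vertexSupport f) ≤ 2 * #{e ∈ faceSet X 2 | e ⊆ vertexSupport f} / k := by
  set S := vertexSupport f
  set ES := {e ∈ faceSet X 2 | e ⊆ S}
  have hlocal : ∀ v ∈ S, ε ≤ (#{e ∈ ES | v ∈ e} : ℝ) / k := fun v hvS => by
    have hv := singleton_mem_of_mem_vertexSupport hvS
    refine (hdist v hv _ (ne_zero_of_mem_vertexSupport hvS hv)).trans ?_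
    gcongr
    exact hf.card_apply_ne_zero_le hX hv
  have hdouble : ∑ v ∈ S, (#{e ∈ ES | v ∈ e} : ℝ) ≤ 2 * #ES := by
    exact_mod_cast sum_card_filter_mem_le_mul_card S fun e he => by
      simp only [ES, faceSet, mem_filter] at he
      exact he.1.2.le
  calc ε * #S = ∑ _v ∈ S, ε := by rw [sum_const, nsmul_eq_mul, mul_comm]
    _ ≤ ∑ v ∈ S, (#{e ∈ ES | v ∈ e} : ℝ) / k := sum_le_sum hlocal
    _ ≤ 2 * #ES / k := by rw [← sum_div]; gcongr

end ZeroCocycle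

/-- Let `X` be a `k`-regular finite graph with `n` vertices which is an
`α`-skeleton expander (for every vertex set `S`, `w(E(S)) ≤ w(S)² + α w(S)`, with the
canonical weights `w(v) = 1/n`, `w(e) = 2/(kn)`).  For each vertex `v` let
`T v : F^m → F^{E(v)} ≅ F^k` be an injective linear map whose image is a code of relative
distance `≥ ε`, where `ε > α`.  Then every nonzero global section `f` of the associated
sheaf (i.e. `(T u (f u))(e) = (T v (f v))(e)` for every edge `e = {u,v}`) satisfies
`‖f‖_Ham = #{v : f(v) ≠ 0}/n ≥ ε - α`: the 0-cocycle code has relative distance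
at least `ε - α`. -/
theorem expander_code_distance [Fintype V]
    (X : Finset (Finset V)) (hX : IsComplex X)
    (F : Type) [Field F] (k n m : ℕ)
    (hn : n = (Finset.univ.filter (fun v : V => ({v} : Finset V) ∈ X)).card)
    (α ε : ℝ)
    (hexp : ∀ S : Finset V, (∀ v ∈ S, ({v} : Finset V) ∈ X) →
      2 * (((faceSet X 2).filter (fun e => e ⊆ S)).card : ℝ) / (k * n)
        ≤ ((S.card : ℝ) / n) ^ 2 + α * ((S.card : ℝ) / n))
    (T : ∀ v : V, ({v} : Finset V) ∈ X →
      ((Fin m → F) →ₗ[F] ({e : Finset V // e ∈ X ∧ e.card = 2 ∧ v ∈ e} → F)))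
    (hdist : ∀ (v : V) (hv : ({v} : Finset V) ∈ X) (c : Fin m → F), c ≠ 0 →
      ε ≤ ((Finset.univ.filter
        (fun e : {e : Finset V // e ∈ X ∧ e.card = 2 ∧ v ∈ e} => T v hv c e ≠ 0)).card : ℝ) / k)
    (f : (v : {v : V // ({v} : Finset V) ∈ X}) → Fin m → F)
    (hf : ∀ (u v : V) (hu : ({u} : Finset V) ∈ X) (hv : ({v} : Finset V) ∈ X)
      (hne : u ≠ v) (he : ({u, v} : Finset V) ∈ X),
      T u hu (f ⟨u, hu⟩) ⟨{u, v}, he, Finset.card_pair hne, Finset.mem_insert_self u {v}⟩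
        = T v hv (f ⟨v, hv⟩) ⟨{u, v}, he, Finset.card_pair hne, by simp⟩)
    (hfne : f ≠ 0) :
    ε - α ≤ ((Finset.univ.filter
        (fun v : {v : V // ({v} : Finset V) ∈ X} => f v ≠ 0)).card : ℝ) / n := by
  set S := vertexSupport f
  obtain ⟨v₀, hv₀⟩ := Function.ne_iff.mp hfne
  have hn_pos : (0 : ℝ) < n := by
    rw [hn]
    exact_mod_cast card_pos.2 ⟨v₀.1, mem_filter.2 ⟨mem_univ _, v₀.2⟩⟩
  have hw_pos : (0 : ℝ) < #S / n :=
    div_pos (by exact_mod_cast card_pos.2 ⟨v₀.1, mem_vertexSupport v₀.2 hv₀⟩) hn_pos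
  have hεw : ε * (#S / n) ≤ (#S / n) ^ 2 + α * (#S / n) :=
    calc ε * (#S / n) = ε * #S / n := (mul_div_assoc _ _ _).symm
      _ ≤ 2 * #{e ∈ faceSet X 2 | e ⊆ S} / k / n :=
        div_le_div_of_nonneg_right (IsGlobalSection.mul_card_vertexSupport_le hf hX hdist)
          hn_pos.le
      _ ≤ _ := by rw [div_div]; exact hexp S fun v hv => singleton_mem_of_mem_vertexSupport hv
  rw [← card_vertexSupport]
  nlinarith [hw_pos, hεw]
end
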